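/- arXiv:1606.08216 — 6 statements merged into one kernel-verified Lean document; each statement's English description precedes it below -/
import Mathlib

section
/- Let K be a nonempty closed convex subset of a real Banach space E with a partial order ≤ induced by a closed convex cone P, and let T : K → K be a monotone α-nonexpansive mapping for some α < 1. If there exists a fixed point p of T and some x ∈ K with x ≤ p or p ≤ x, then T is monotone quasi-nonexpansive, i.e., ‖Tx − p‖ ≤ ‖x − p‖ for every fixed point p of T and every x ∈ K with x ≤ p or p ≤ x. -/
open Filter Topology

/-- A closed convex cone in a real normed space: nonempty, closed, not `{0}`,
pointed (`P ∩ (−P) = {0}`), and closed under nonnegative linear combinations. -/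
def IsClosedConvexCone {E : Type*} [NormedAddCommGroup E] [NormedSpace ℝ E]
    (P : Set E) : Prop :=
  P.Nonempty ∧ IsClosed P ∧ P ≠ {0} ∧ P ∩ (-P) = {0} ∧
    ∀ x ∈ P, ∀ y ∈ P, ∀ a b : ℝ, 0 ≤ a → 0 ≤ b → a • x + b • y ∈ P

/-- Weak convergence of a sequence: `f (x n) → f l` for every continuous
linear functional `f`. -/
def WeakConv {E : Type*} [NormedAddCommGroup E] [NormedSpace ℝ E]
    (x : ℕ → E) (l : E) : Prop :=
  ∀ f : E →L[ℝ] ℝ, Tendsto (fun n => f (x n)) atTop (𝓝 (f l))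

/-- `T` is monotone (w.r.t. the order `x ≤ y ↔ y - x ∈ P`) and α-nonexpansive
on `K`. -/
def MonotoneAlphaNonexpansive {E : Type*} [NormedAddCommGroup E] [NormedSpace ℝ E]
    (P K : Set E) (T : E → E) (α : ℝ) : Prop :=
  (∀ x ∈ K, ∀ y ∈ K, y - x ∈ P → T y - T x ∈ P) ∧
    ∀ x ∈ K, ∀ y ∈ K, y - x ∈ P →
      ‖T x - T y‖ ^ 2 ≤ α * ‖T x - y‖ ^ 2 + α * ‖T y - x‖ ^ 2
        + (1 - 2 * α) * ‖x - y‖ ^ 2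

open Function

theorem le_of_sq_le_affine_combination {a b α : ℝ} (hα : α < 1) (hb : 0 ≤ b)
    (h : a ^ 2 ≤ α * a ^ 2 + α * b ^ 2 + (1 - 2 * α) * b ^ 2) : a ≤ b := by
  have hsq : a ^ 2 ≤ b ^ 2 := by nlinarith
  exact (le_abs_self a).trans (abs_le_of_sq_le_sq hsq hb)

theorem MonotoneAlphaNonexpansive.norm_apply_sub_le_of_isFixedPt
    {E : Type*} [NormedAddCommGroup E] [NormedSpace ℝ E] {P K : Set E} {T : E → E} {α : ℝ}
    (hT : MonotoneAlphaNonexpansive P K T α) (hα : α < 1) {p x : E} (hp : p ∈ K)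
    (hTp : IsFixedPt T p) (hx : x ∈ K) (hcmp : p - x ∈ P ∨ x - p ∈ P) :
    ‖T x - p‖ ≤ ‖x - p‖ := by
  refine le_of_sq_le_affine_combination hα (norm_nonneg _) ?_
  rcases hcmp with hxp | hpx
  · simpa only [hTp.eq, norm_sub_rev p x] using hT.2 x hx p hp hxp
  · simpa only [hTp.eq, norm_sub_rev p (T x), norm_sub_rev p x,
      add_comm (α * ‖x - p‖ ^ 2)]
      using hT.2 p hp x hx hpx

theorem monotone_alpha_nonexpansive_is_quasi_nonexpansive_general
    {E : Type*} [NormedAddCommGroup E] [NormedSpace ℝ E]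
    (P : Set E)
    (K : Set E)
    (T : E → E)
    (α : ℝ) (hα : α < 1)
    (hT : MonotoneAlphaNonexpansive P K T α) :
    ∀ p ∈ K, T p = p → ∀ x ∈ K, (p - x ∈ P ∨ x - p ∈ P) →
      ‖T x - p‖ ≤ ‖x - p‖ :=
  fun _ hp hTp _ hx hcmp => hT.norm_apply_sub_le_of_isFixedPt hα hp hTp hx hcmp

/-- If a monotone α-nonexpansive map has a fixed point comparable with some
point of `K`, then it is monotone quasi-nonexpansive. -/
theorem monotone_alpha_nonexpansive_is_quasi_nonexpansive
    {E : Type*} [NormedAddCommGroup E] [NormedSpace ℝ E] [CompleteSpace E]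
    (P : Set E) (hP : IsClosedConvexCone P)
    (K : Set E) (hKne : K.Nonempty) (hKcl : IsClosed K) (hKco : Convex ℝ K)
    (T : E → E) (hTK : ∀ x ∈ K, T x ∈ K)
    (α : ℝ) (hα : α < 1)
    (hT : MonotoneAlphaNonexpansive P K T α)
    (hfix : ∃ p ∈ K, T p = p ∧ ∃ x ∈ K, (p - x ∈ P ∨ x - p ∈ P)) :
    ∀ p ∈ K, T p = p → ∀ x ∈ K, (p - x ∈ P ∨ x - p ∈ P) →
      ‖T x - p‖ ≤ ‖x - p‖ :=
  monotone_alpha_nonexpansive_is_quasi_nonexpansive_general P K T α hα hT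
end

section
/- Let K be a nonempty closed convex subset of a real Banach space E with a partial order ≤ induced by a closed convex cone P, and let T : K → K be a monotone α-nonexpansive mapping for some α < 1. Then for all x, y ∈ K with x ≤ y or y ≤ x, ‖Tx − Ty‖² ≤ ‖x − y‖² + (2α/(1 − α))‖Tx − x‖² + (2|α|/(1 − α))‖Tx − x‖(‖x − y‖ + ‖Tx − Ty‖). -/
open Filter Topology

/- With `a = ‖Tx − Ty‖`, `b = ‖x − y‖`, `c = ‖Tx − x‖`, the mixed distances of the
α-nonexpansive inequality are `‖Tx − y‖ = ‖(Tx − x) − (y − x)‖` and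
`‖Ty − x‖ = ‖(Tx − x) − (Tx − Ty)‖`. When `α ≥ 0` the triangle inequality bounds them above
by `c + b` and `c + a`; when `α < 0` it bounds them below by `|c − b|` and `|c − a|`. Either
way `(1 − α)a² ≤ (1 − α)b² + 2αc² + 2|α|c(b + a)`, and one divides by `1 − α > 0`. -/
lemma mul_norm_sub_sq_le {E : Type*} [SeminormedAddCommGroup E] (α : ℝ) (u v : E) :
    α * ‖u - v‖ ^ 2 ≤ α * (‖u‖ ^ 2 + ‖v‖ ^ 2) + 2 * |α| * ‖u‖ * ‖v‖ := by
  rcases le_or_gt 0 α with hα | hα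
  · have hle : ‖u - v‖ ^ 2 ≤ (‖u‖ + ‖v‖) ^ 2 :=
      pow_le_pow_left₀ (norm_nonneg _) (norm_sub_le u v) 2
    rw [abs_of_nonneg hα]
    nlinarith [mul_le_mul_of_nonneg_left hle hα]
  · have hge : (‖u‖ - ‖v‖) ^ 2 ≤ ‖u - v‖ ^ 2 := by
      rw [← sq_abs]
      exact pow_le_pow_left₀ (abs_nonneg _) (abs_norm_sub_norm_le u v) 2
    rw [abs_of_neg hα]
    nlinarith [mul_le_mul_of_nonpos_left hge hα.le]

lemma MonotoneAlphaNonexpansive.norm_sub_sq_le_of_comparable {E : Type*}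
    [NormedAddCommGroup E] [NormedSpace ℝ E] {P K : Set E} {T : E → E} {α : ℝ}
    (hT : MonotoneAlphaNonexpansive P K T α) {x y : E} (hx : x ∈ K) (hy : y ∈ K)
    (hxy : y - x ∈ P ∨ x - y ∈ P) :
    ‖T x - T y‖ ^ 2 ≤ α * ‖T x - y‖ ^ 2 + α * ‖T y - x‖ ^ 2 + (1 - 2 * α) * ‖x - y‖ ^ 2 := by
  rcases hxy with h | h
  · exact hT.2 x hx y hy h
  · have h' := hT.2 y hy x hx h
    rw [norm_sub_rev (T y), norm_sub_rev y] at h'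
    linarith

lemma sq_le_of_alpha_nonexpansive_bound {α a b c : ℝ} (hα : α < 1)
    (h : a ^ 2 ≤ α * (c ^ 2 + b ^ 2) + 2 * |α| * c * b + (α * (c ^ 2 + a ^ 2)
      + 2 * |α| * c * a) + (1 - 2 * α) * b ^ 2) :
    a ^ 2 ≤ b ^ 2 + (2 * α / (1 - α)) * c ^ 2 + (2 * |α| / (1 - α)) * c * (b + a) := by
  have hpos : 0 < 1 - α := sub_pos.mpr hα
  rw [← mul_le_mul_iff_right₀ hpos]
  calc (1 - α) * a ^ 2 ≤ (1 - α) * b ^ 2 + 2 * α * c ^ 2 + 2 * |α| * c * (b + a) := by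
        linarith
    _ = (1 - α) * (b ^ 2 + (2 * α / (1 - α)) * c ^ 2 + (2 * |α| / (1 - α)) * c * (b + a)) := by
        field_simp

theorem monotone_alpha_nonexpansive_key_inequality_general
    {E : Type*} [NormedAddCommGroup E] [NormedSpace ℝ E]
    (P : Set E)
    (K : Set E)
    (T : E → E)
    (α : ℝ) (hα : α < 1)
    (hT : MonotoneAlphaNonexpansive P K T α) :
    ∀ x ∈ K, ∀ y ∈ K, (y - x ∈ P ∨ x - y ∈ P) →
      ‖T x - T y‖ ^ 2 ≤ ‖x - y‖ ^ 2 + (2 * α / (1 - α)) * ‖T x - x‖ ^ 2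
        + (2 * |α| / (1 - α)) * ‖T x - x‖ * (‖x - y‖ + ‖T x - T y‖) := by
  intro x hx y hy hxy
  have hTxy := hT.norm_sub_sq_le_of_comparable hx hy hxy
  have hd := mul_norm_sub_sq_le α (T x - x) (y - x)
  have he := mul_norm_sub_sq_le α (T x - x) (T x - T y)
  rw [sub_sub_sub_cancel_right, norm_sub_rev y x] at hd
  rw [sub_sub_sub_cancel_left] at he
  exact sq_le_of_alpha_nonexpansive_bound hα (by linarith)

/-- Key inequality for monotone α-nonexpansive mappings. -/
theorem monotone_alpha_nonexpansive_key_inequality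
    {E : Type*} [NormedAddCommGroup E] [NormedSpace ℝ E] [CompleteSpace E]
    (P : Set E) (hP : IsClosedConvexCone P)
    (K : Set E) (hKne : K.Nonempty) (hKcl : IsClosed K) (hKco : Convex ℝ K)
    (T : E → E) (hTK : ∀ x ∈ K, T x ∈ K)
    (α : ℝ) (hα : α < 1)
    (hT : MonotoneAlphaNonexpansive P K T α) :
    ∀ x ∈ K, ∀ y ∈ K, (y - x ∈ P ∨ x - y ∈ P) →
      ‖T x - T y‖ ^ 2 ≤ ‖x - y‖ ^ 2 + (2 * α / (1 - α)) * ‖T x - x‖ ^ 2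
        + (2 * |α| / (1 - α)) * ‖T x - x‖ * (‖x - y‖ + ‖T x - T y‖) :=
  monotone_alpha_nonexpansive_key_inequality_general P K T α hα hT
end

section
/- Let E be a uniformly convex real Banach space with a partial order ≤ induced by a closed convex cone P, and let {x_n} be a monotone sequence in E (either x_n ≤ x_{n+1} for all n, or x_{n+1} ≤ x_n for all n) that is bounded in norm. Then {x_n} converges weakly to some point x ∈ E. -/
open Filter Topology

/-! Replacing `P` by `-P` reduces to an increasing sequence. The closed convex hulls `Hₙ` of
the tails `{xₖ | k ≥ n}` are nested, nonempty, bounded, closed and convex; in a uniformly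
convex Banach space such a family has a common point, since points of almost minimal norm
form a Cauchy sequence (their midpoints stay in the sets). A common point of the `Hₙ` is an
upper bound of the `xₖ` lying below every upper bound, so `⋂ Hₙ = {v}`. If `f xₙ ≥ a > f v`
for infinitely many `n`, the sets `Hₙ ∩ {f ≥ a}` form another such family, and its common
point can only be `v`: a contradiction. -/

open Set Bornology

section ClosedConvexHull

variable {E : Type*} [NormedAddCommGroup E] [NormedSpace ℝ E]

theorem isBounded_closedConvexHull {s : Set E} (hs : IsBounded s) :
    IsBounded (closedConvexHull ℝ s) := by
  rw [closedConvexHull_eq_closure_convexHull]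
  exact (isBounded_convexHull.2 hs).closure

theorem antitone_closedConvexHull_image_Ici (x : ℕ → E) :
    Antitone fun n => closedConvexHull ℝ (x '' Ici n) := fun _ _ hmn =>
  (closedConvexHull ℝ).monotone (image_mono (Ici_subset_Ici.2 hmn))

end ClosedConvexHull

section UniformConvex

variable {E : Type*} [NormedAddCommGroup E] [NormedSpace ℝ E] [UniformConvexSpace E]

variable (E) in
theorem exists_forall_norm_add_le_two_mul_sub_of_le {ε : ℝ} (hε : 0 < ε) (R₀ : ℝ) :
    ∃ δ, 0 < δ ∧ ∀ R ≤ R₀, ∀ ⦃x : E⦄, ‖x‖ ≤ R → ∀ ⦃y⦄, ‖y‖ ≤ R →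
      ε ≤ ‖x - y‖ → ‖x + y‖ ≤ 2 * R - δ := by
  have hR₁ : 0 < max R₀ ε := lt_max_of_lt_right hε
  obtain ⟨δ, hδ, huc⟩ := exists_forall_closed_ball_dist_add_le_two_sub E (div_pos hε hR₁)
  refine ⟨ε / 2 * δ, by positivity, fun R hR x hx y hy hxy => ?_⟩
  have hRε : ε ≤ 2 * R := hxy.trans ((norm_sub_le x y).trans (by linarith))
  have hRpos : 0 < R := by linarith
  have hscale : ∀ z : E, ‖R⁻¹ • z‖ = ‖z‖ / R := fun z => by
    rw [norm_smul_of_nonneg (inv_nonneg.2 hRpos.le), inv_mul_eq_div]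
  have hunit : ‖R⁻¹ • x + R⁻¹ • y‖ ≤ 2 - δ := by
    refine huc (by rw [hscale, div_le_one hRpos]; exact hx)
      (by rw [hscale, div_le_one hRpos]; exact hy) ?_
    rw [← smul_sub, hscale]
    calc ε / max R₀ ε ≤ ε / R := div_le_div_of_nonneg_left hε.le hRpos (le_max_of_le_left hR)
      _ ≤ ‖x - y‖ / R := div_le_div_of_nonneg_right hxy hRpos.le
  rw [← smul_add, hscale, div_le_iff₀ hRpos] at hunit
  nlinarith

theorem cauchySeq_of_norm_le_of_two_mul_le_norm_add {v : ℕ → E} {r s : ℕ → ℝ} {c : ℝ}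
    (hr : Tendsto r atTop (𝓝 c)) (hs : Tendsto s atTop (𝓝 c)) (hv : ∀ n, ‖v n‖ ≤ r n)
    (hadd : ∀ N m n, N ≤ m → N ≤ n → 2 * s N ≤ ‖v m + v n‖) : CauchySeq v := by
  rw [Metric.cauchySeq_iff]
  intro ε hε
  obtain ⟨δ, hδ, huc⟩ := exists_forall_norm_add_le_two_mul_sub_of_le E hε (c + 1)
  set η := min (δ / 8) 1
  have hη : 0 < η := by positivity
  have hηδ : η ≤ δ / 8 := min_le_left _ _
  have hη1 : η ≤ 1 := min_le_right _ _
  obtain ⟨N, hN⟩ := eventually_atTop.1 <|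
    (hr.eventually (ge_mem_nhds (lt_add_of_pos_right c hη))).and
      (hs.eventually (lt_mem_nhds (sub_lt_self c hη)))
  refine ⟨N, fun m hm n hn => ?_⟩
  by_contra! hεmn
  rw [dist_eq_norm] at hεmn
  have hupper := huc (c + η) (by linarith) ((hv m).trans (hN m hm).1) ((hv n).trans (hN n hn).1)
    hεmn
  have hlower := hadd N m n hm hn
  have hsN := (hN N le_rfl).2
  linarith

variable [CompleteSpace E]

theorem nonempty_iInter_of_antitone_of_convex_of_isClosed {D : ℕ → Set E} (hanti : Antitone D)
    (hne : ∀ n, (D n).Nonempty) (hconv : ∀ n, Convex ℝ (D n)) (hclosed : ∀ n, IsClosed (D n))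
    (hbdd : IsBounded (D 0)) : (⋂ n, D n).Nonempty := by
  set d : ℕ → ℝ := fun n => Metric.infDist 0 (D n)
  have hd_mono : Monotone d := fun m n hmn => Metric.infDist_le_infDist_of_subset (hanti hmn) (hne n)
  obtain ⟨M, hM⟩ := isBounded_iff_forall_norm_le.1 hbdd
  have hd_le : ∀ n, d n ≤ M := fun n => by
    obtain ⟨z, hz⟩ := hne n
    calc d n ≤ dist 0 z := Metric.infDist_le_dist_of_mem hz
      _ = ‖z‖ := dist_zero_left z
      _ ≤ M := hM z (hanti (Nat.zero_le n) hz)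
  have hd_lim : Tendsto d atTop (𝓝 (⨆ n, d n)) :=
    tendsto_atTop_ciSup hd_mono ⟨M, forall_mem_range.2 hd_le⟩
  have happrox : ∀ n : ℕ, ∃ z ∈ D n, dist 0 z < d n + 1 / (n + 1) := fun n =>
    (Metric.infDist_lt_iff (hne n)).1 (lt_add_of_pos_right _ Nat.one_div_pos_of_nat)
  choose v hvD hv using happrox
  have hcauchy : CauchySeq v := by
    refine cauchySeq_of_norm_le_of_two_mul_le_norm_add
      (by simpa using hd_lim.add tendsto_one_div_add_atTop_nhds_zero_nat) hd_lim
      (fun n => by simpa using (hv n).le) fun N m n hm hn => ?_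
    have hmid : (1 / 2 : ℝ) • v m + (1 / 2 : ℝ) • v n ∈ D N :=
      hconv N (hanti hm (hvD m)) (hanti hn (hvD n)) (by norm_num) (by norm_num) (by norm_num)
    have := Metric.infDist_le_dist_of_mem (x := 0) hmid
    rw [dist_zero_left, ← smul_add, norm_smul_of_nonneg (by norm_num)] at this
    linarith
  obtain ⟨l, hl⟩ := cauchySeq_tendsto_of_complete hcauchy
  exact ⟨l, mem_iInter.2 fun n => (hclosed n).mem_of_tendsto hl <|
    (eventually_ge_atTop n).mono fun m hm => hanti hm (hvD m)⟩

theorem eventually_apply_lt_of_subsingleton_iInter {x : ℕ → E} (hx : IsBounded (range x))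
    (hsub : (⋂ n, closedConvexHull ℝ (x '' Ici n)).Subsingleton) {l : E}
    (hl : l ∈ ⋂ n, closedConvexHull ℝ (x '' Ici n)) (f : E →L[ℝ] ℝ) {a : ℝ} (ha : f l < a) :
    ∀ᶠ n in atTop, f (x n) < a := by
  by_contra h
  simp only [not_eventually, not_lt] at h
  obtain ⟨w, hw⟩ := nonempty_iInter_of_antitone_of_convex_of_isClosed
    (D := fun n => closedConvexHull ℝ (x '' Ici n) ∩ {z | a ≤ f z})
    (fun _ _ hmn => inter_subset_inter_left _ (antitone_closedConvexHull_image_Ici x hmn))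
    (fun n => by
      obtain ⟨k, hk, hak⟩ := frequently_atTop.1 h n
      exact ⟨x k, subset_closedConvexHull ⟨k, hk, rfl⟩, hak⟩)
    (fun _ => convex_closedConvexHull.inter (convex_halfSpace_ge f.isLinear a))
    (fun _ => isClosed_closedConvexHull.inter (isClosed_le continuous_const f.continuous))
    ((isBounded_closedConvexHull (hx.subset (image_subset_range _ _))).subset inter_subset_left)
  rw [mem_iInter] at hw
  have hwl : w = l := hsub (mem_iInter.2 fun n => (hw n).1) hl
  exact (hw 0).2.not_gt (hwl ▸ ha)

theorem exists_weakConv_of_subsingleton_iInter {x : ℕ → E} (hx : IsBounded (range x))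
    (hsub : (⋂ n, closedConvexHull ℝ (x '' Ici n)).Subsingleton) : ∃ l, WeakConv x l := by
  obtain ⟨l, hl⟩ := nonempty_iInter_of_antitone_of_convex_of_isClosed
    (antitone_closedConvexHull_image_Ici x)
    (fun n => ⟨x n, subset_closedConvexHull ⟨n, mem_Ici.2 le_rfl, rfl⟩⟩)
    (fun _ => convex_closedConvexHull) (fun _ => isClosed_closedConvexHull)
    (isBounded_closedConvexHull (hx.subset (image_subset_range _ _)))
  refine ⟨l, fun f => tendsto_order.2 ⟨fun a ha => ?_,
    fun a ha => eventually_apply_lt_of_subsingleton_iInter hx hsub hl f ha⟩⟩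
  filter_upwards [eventually_apply_lt_of_subsingleton_iInter hx hsub hl (-f) (neg_lt_neg ha)]
    with n hn
  simpa using hn

end UniformConvex

namespace IsClosedConvexCone

variable {E : Type*} [NormedAddCommGroup E] [NormedSpace ℝ E] {P : Set E}

theorem zero_mem (hP : IsClosedConvexCone P) : (0 : E) ∈ P := by
  obtain ⟨p, hp⟩ := hP.1
  simpa using hP.2.2.2.2 p hp p hp 0 0 le_rfl le_rfl

theorem add_mem (hP : IsClosedConvexCone P) {a b : E} (ha : a ∈ P) (hb : b ∈ P) : a + b ∈ P := by
  simpa using hP.2.2.2.2 a ha b hb 1 1 zero_le_one zero_le_one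

theorem convex (hP : IsClosedConvexCone P) : Convex ℝ P :=
  fun a ha b hb s t hs ht _ => hP.2.2.2.2 a ha b hb s t hs ht

theorem eq_of_sub_mem_of_sub_mem (hP : IsClosedConvexCone P) {a b : E} (hab : a - b ∈ P)
    (hba : b - a ∈ P) : a = b := by
  have hmem : a - b ∈ P ∩ -P := ⟨hab, by simpa using hba⟩
  rw [hP.2.2.2.1] at hmem
  exact sub_eq_zero.1 hmem

theorem neg (hP : IsClosedConvexCone P) : IsClosedConvexCone (-P) := by
  obtain ⟨hne, hclosed, hnz, hpointed, hcomb⟩ := hP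
  refine ⟨hne.neg, hclosed.neg, fun h => hnz ?_, ?_, fun a ha b hb s t hs ht => ?_⟩
  · rw [← neg_neg P, h, Set.neg_singleton, neg_zero]
  · rw [neg_neg, inter_comm, hpointed]
  · rw [Set.mem_neg, neg_add, ← smul_neg, ← smul_neg]
    exact hcomb (-a) ha (-b) hb s t hs ht

theorem sub_mem_of_le (hP : IsClosedConvexCone P) {x : ℕ → E} (hx : ∀ n, x (n + 1) - x n ∈ P)
    {m n : ℕ} (hmn : m ≤ n) : x n - x m ∈ P := by
  induction n, hmn using Nat.le_induction with
  | base => simpa using hP.zero_mem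
  | succ n _ ih => simpa using hP.add_mem (hx n) ih

theorem closedConvexHull_subset_setOf_sub_mem (hP : IsClosedConvexCone P) {s : Set E} {c : E}
    (hs : ∀ z ∈ s, z - c ∈ P) : closedConvexHull ℝ s ⊆ {z | z - c ∈ P} := by
  refine closedConvexHull_min hs ?_ (hP.2.1.preimage (continuous_id.sub continuous_const))
  have hconv := hP.convex.translate_preimage_right (-c)
  simp only [neg_add_eq_sub] at hconv
  exact hconv

theorem subsingleton_iInter_closedConvexHull (hP : IsClosedConvexCone P) {x : ℕ → E}
    (hx : ∀ n, x (n + 1) - x n ∈ P) :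
    (⋂ n, closedConvexHull ℝ (x '' Ici n)).Subsingleton := by
  have hupper : ∀ u ∈ ⋂ n, closedConvexHull ℝ (x '' Ici n), ∀ k, u - x k ∈ P := by
    intro u hu k
    refine hP.closedConvexHull_subset_setOf_sub_mem ?_ (mem_iInter.1 hu k)
    rintro _ ⟨j, hj, rfl⟩
    exact hP.sub_mem_of_le hx hj
  have hleast : ∀ u ∈ ⋂ n, closedConvexHull ℝ (x '' Ici n),
      ∀ w ∈ ⋂ n, closedConvexHull ℝ (x '' Ici n), w - u ∈ P := by
    intro u hu w hw
    have hsub := hP.neg.closedConvexHull_subset_setOf_sub_mem (s := x '' Ici 0) (c := w) ?_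
    · simpa using hsub (mem_iInter.1 hu 0)
    · rintro _ ⟨k, -, rfl⟩
      simpa using hupper w hw k
  exact fun u hu w hw => hP.eq_of_sub_mem_of_sub_mem (hleast w hw u hu) (hleast u hu w hw)

end IsClosedConvexCone

/-- In a uniformly convex Banach space, a norm-bounded monotone sequence
(w.r.t. the order induced by a closed convex cone) converges weakly. -/
theorem bounded_monotone_seq_weak_convergence
    {E : Type*} [NormedAddCommGroup E] [NormedSpace ℝ E]
    [UniformConvexSpace E] [CompleteSpace E]
    (P : Set E) (hP : IsClosedConvexCone P)
    (x : ℕ → E)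
    (hmono : (∀ n, x (n + 1) - x n ∈ P) ∨ (∀ n, x n - x (n + 1) ∈ P))
    (hbdd : ∃ M : ℝ, ∀ n, ‖x n‖ ≤ M) :
    ∃ l : E, WeakConv x l := by
  obtain ⟨M, hM⟩ := hbdd
  refine exists_weakConv_of_subsingleton_iInter
    (isBounded_iff_forall_norm_le.2 ⟨M, forall_mem_range.2 hM⟩) ?_
  rcases hmono with hinc | hdec
  · exact hP.subsingleton_iInter_closedConvexHull hinc
  · exact hP.neg.subsingleton_iInter_closedConvexHull fun n => by simpa using hdec n
end

section
/- Let K be a nonempty closed convex subset of a uniformly convex real Banach space E with a partial order ≤ induced by a closed convex cone P, and let T : K → K be a monotone α-nonexpansive mapping for some α < 1. If there exist a fixed point p of T and a point x₀ ∈ K with x₀ ≤ p, then the orbit O(x₀) = {Tⁿx₀ : n = 0, 1, 2, ...} is bounded in norm. -/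
open Filter Topology

/-!
Monotonicity keeps every iterate `Tⁿ x₀` below the fixed point `p`, so the
α-nonexpansive inequality applies to the pair `(Tⁿ x₀, p)`. With `T p = p` it reads
`‖T x - p‖² ≤ α ‖T x - p‖² + (1 - α) ‖x - p‖²`, and since `α < 1` this gives
`‖T x - p‖ ≤ ‖x - p‖`. Hence the orbit stays in the closed ball of radius `‖x₀ - p‖`
about `p`.
-/

namespace MonotoneAlphaNonexpansive

variable {E : Type*} [NormedAddCommGroup E] [NormedSpace ℝ E]
  {P K : Set E} {T : E → E} {α : ℝ} {p x : E}

theorem sub_apply_mem_of_fixedPoint (hT : MonotoneAlphaNonexpansive P K T α)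
    (hp : p ∈ K) (hfix : T p = p) (hx : x ∈ K) (hxp : p - x ∈ P) :
    p - T x ∈ P := by
  simpa only [hfix] using hT.1 x hx p hp hxp

theorem norm_apply_sub_fixedPoint_le (hT : MonotoneAlphaNonexpansive P K T α)
    (hα : α < 1) (hp : p ∈ K) (hfix : T p = p) (hx : x ∈ K) (hxp : p - x ∈ P) :
    ‖T x - p‖ ≤ ‖x - p‖ := by
  have h := hT.2 x hx p hp hxp
  rw [hfix, norm_sub_rev p x] at h
  have hsq : ‖T x - p‖ ^ 2 ≤ ‖x - p‖ ^ 2 := by nlinarith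
  exact (pow_le_pow_iff_left₀ (norm_nonneg _) (norm_nonneg _) two_ne_zero).mp hsq

theorem iterate_mem_and_sub_mem (hT : MonotoneAlphaNonexpansive P K T α)
    (hTK : Set.MapsTo T K K) (hp : p ∈ K) (hfix : T p = p) (hx : x ∈ K)
    (hxp : p - x ∈ P) (n : ℕ) :
    T^[n] x ∈ K ∧ p - T^[n] x ∈ P := by
  induction n with
  | zero => exact ⟨hx, hxp⟩
  | succ n ih =>
    rw [Function.iterate_succ_apply']
    exact ⟨hTK ih.1, hT.sub_apply_mem_of_fixedPoint hp hfix ih.1 ih.2⟩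

theorem norm_iterate_sub_fixedPoint_le (hT : MonotoneAlphaNonexpansive P K T α)
    (hα : α < 1) (hTK : Set.MapsTo T K K) (hp : p ∈ K) (hfix : T p = p) (hx : x ∈ K)
    (hxp : p - x ∈ P) (n : ℕ) :
    ‖T^[n] x - p‖ ≤ ‖x - p‖ := by
  induction n with
  | zero => rfl
  | succ n ih =>
    obtain ⟨hxn, hxnp⟩ := hT.iterate_mem_and_sub_mem hTK hp hfix hx hxp n
    rw [Function.iterate_succ_apply']
    exact (hT.norm_apply_sub_fixedPoint_le hα hp hfix hxn hxnp).trans ih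

end MonotoneAlphaNonexpansive

theorem orbit_bounded_of_fixed_point_above_general
    {E : Type*} [NormedAddCommGroup E] [NormedSpace ℝ E]
    (P : Set E)
    (K : Set E)
    (T : E → E) (hTK : ∀ x ∈ K, T x ∈ K)
    (α : ℝ) (hα : α < 1)
    (hT : MonotoneAlphaNonexpansive P K T α)
    (p : E) (hp : p ∈ K) (hfix : T p = p)
    (x₀ : E) (hx₀ : x₀ ∈ K) (hle : p - x₀ ∈ P) :
    ∃ M : ℝ, ∀ n : ℕ, ‖T^[n] x₀‖ ≤ M := by
  refine ⟨‖p‖ + ‖x₀ - p‖, fun n => ?_⟩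
  calc ‖T^[n] x₀‖ ≤ ‖p‖ + ‖T^[n] x₀ - p‖ := norm_le_norm_add_norm_sub' _ _
    _ ≤ ‖p‖ + ‖x₀ - p‖ := by
      gcongr
      exact hT.norm_iterate_sub_fixedPoint_le hα hTK hp hfix hx₀ hle n

/-- If `T` has a fixed point `p` and `x₀ ≤ p`, then the orbit of `x₀` is
norm-bounded. -/
theorem orbit_bounded_of_fixed_point_above
    {E : Type*} [NormedAddCommGroup E] [NormedSpace ℝ E]
    [UniformConvexSpace E] [CompleteSpace E]
    (P : Set E) (hP : IsClosedConvexCone P)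
    (K : Set E) (hKne : K.Nonempty) (hKcl : IsClosed K) (hKco : Convex ℝ K)
    (T : E → E) (hTK : ∀ x ∈ K, T x ∈ K)
    (α : ℝ) (hα : α < 1)
    (hT : MonotoneAlphaNonexpansive P K T α)
    (p : E) (hp : p ∈ K) (hfix : T p = p)
    (x₀ : E) (hx₀ : x₀ ∈ K) (hle : p - x₀ ∈ P) :
    ∃ M : ℝ, ∀ n : ℕ, ‖T^[n] x₀‖ ≤ M :=
  orbit_bounded_of_fixed_point_above_general P K T hTK α hα hT p hp hfix x₀ hx₀ hle
end

section
/- Let K be a nonempty closed convex subset of a uniformly convex real Banach space E with a partial order ≤ induced by a closed convex cone P, and let T : K → K be a monotone α-nonexpansive mapping for some α < 1. If there exist a fixed point p of T and a point x₀ ∈ K with p ≤ x₀, then the orbit O(x₀) = {Tⁿx₀ : n = 0, 1, 2, ...} is bounded in norm. -/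
/-!
Putting `x = p` in the α-nonexpansive inequality and using `T p = p` leaves
`(1 - α) ‖T y - p‖² ≤ (1 - α) ‖y - p‖²` for every `y ∈ K` with `p ≤ y`, so `T` does not move
such points away from `p`. Monotonicity keeps the whole orbit of `x₀` above `p`, hence the orbit
stays in the closed ball of radius `‖x₀ - p‖` about `p`.
-/

open Filter Topology

open Function Set

namespace MonotoneAlphaNonexpansive

variable {E : Type*} [NormedAddCommGroup E] [NormedSpace ℝ E] {P K : Set E} {T : E → E} {α : ℝ}
  {p : E}

theorem norm_apply_sub_le_of_fixed (hT : MonotoneAlphaNonexpansive P K T α) (hα : α < 1)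
    (hp : p ∈ K) (hfix : T p = p) {y : E} (hy : y ∈ K) (hpy : y - p ∈ P) :
    ‖T y - p‖ ≤ ‖y - p‖ := by
  have h := hT.2 p hp y hy hpy
  rw [hfix, norm_sub_rev p (T y), norm_sub_rev p y] at h
  have hsq : ‖T y - p‖ ^ 2 ≤ ‖y - p‖ ^ 2 :=
    le_of_mul_le_mul_left (by linarith) (by linarith : (0 : ℝ) < 1 - α)
  exact (pow_le_pow_iff_left₀ (norm_nonneg _) (norm_nonneg _) two_ne_zero).1 hsq

theorem iterate_sub_mem_of_fixed (hT : MonotoneAlphaNonexpansive P K T α) (hTK : MapsTo T K K)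
    (hp : p ∈ K) (hfix : T p = p) {x₀ : E} (hx₀ : x₀ ∈ K) (hle : x₀ - p ∈ P) (n : ℕ) :
    T^[n] x₀ - p ∈ P := by
  induction n with
  | zero => exact hle
  | succ n ih =>
    rw [iterate_succ_apply']
    simpa only [hfix] using hT.1 p hp _ (hTK.iterate n hx₀) ih

theorem norm_iterate_sub_le_of_fixed (hT : MonotoneAlphaNonexpansive P K T α) (hα : α < 1)
    (hTK : MapsTo T K K) (hp : p ∈ K) (hfix : T p = p) {x₀ : E} (hx₀ : x₀ ∈ K)
    (hle : x₀ - p ∈ P) (n : ℕ) :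
    ‖T^[n] x₀ - p‖ ≤ ‖x₀ - p‖ := by
  induction n with
  | zero => rfl
  | succ n ih =>
    rw [iterate_succ_apply']
    exact (hT.norm_apply_sub_le_of_fixed hα hp hfix (hTK.iterate n hx₀)
      (hT.iterate_sub_mem_of_fixed hTK hp hfix hx₀ hle n)).trans ih

end MonotoneAlphaNonexpansive

theorem orbit_bounded_of_fixed_point_below_general
    {E : Type*} [NormedAddCommGroup E] [NormedSpace ℝ E]
    (P : Set E)
    (K : Set E)
    (T : E → E) (hTK : ∀ x ∈ K, T x ∈ K)
    (α : ℝ) (hα : α < 1)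
    (hT : MonotoneAlphaNonexpansive P K T α)
    (p : E) (hp : p ∈ K) (hfix : T p = p)
    (x₀ : E) (hx₀ : x₀ ∈ K) (hle : x₀ - p ∈ P) :
    ∃ M : ℝ, ∀ n : ℕ, ‖T^[n] x₀‖ ≤ M :=
  ⟨‖p‖ + ‖x₀ - p‖, fun n => (norm_le_norm_add_norm_sub' _ p).trans <| by
    gcongr; exact hT.norm_iterate_sub_le_of_fixed hα hTK hp hfix hx₀ hle n⟩

/-- If `T` has a fixed point `p` and `p ≤ x₀`, then the orbit of `x₀` is
norm-bounded. -/
theorem orbit_bounded_of_fixed_point_below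
    {E : Type*} [NormedAddCommGroup E] [NormedSpace ℝ E]
    [UniformConvexSpace E] [CompleteSpace E]
    (P : Set E) (hP : IsClosedConvexCone P)
    (K : Set E) (hKne : K.Nonempty) (hKcl : IsClosed K) (hKco : Convex ℝ K)
    (T : E → E) (hTK : ∀ x ∈ K, T x ∈ K)
    (α : ℝ) (hα : α < 1)
    (hT : MonotoneAlphaNonexpansive P K T α)
    (p : E) (hp : p ∈ K) (hfix : T p = p)
    (x₀ : E) (hx₀ : x₀ ∈ K) (hle : x₀ - p ∈ P) :
    ∃ M : ℝ, ∀ n : ℕ, ‖T^[n] x₀‖ ≤ M :=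
  orbit_bounded_of_fixed_point_below_general P K T hTK α hα hT p hp hfix x₀ hx₀ hle
end

section
/- Let E be a uniformly convex real Banach space with a partial order ≤ induced by a closed convex cone P, and let T : P → P be a monotone α-nonexpansive mapping for some α < 1. Then T has a fixed point if and only if the orbit O(0) = {Tⁿ0 : n = 0, 1, 2, ...} is bounded in norm. -/
/-!
If `z ∈ P` is a fixed point, then `Tⁿ0 ≤ z` for all `n`, and the α-nonexpansive inequality at
the comparable pair `(Tⁿ0, z)` gives `‖Tⁿ⁺¹0 - z‖ ≤ ‖Tⁿ0 - z‖ ≤ ‖z‖`.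

Conversely, let the orbit `xₙ = Tⁿ0` be bounded; it is increasing since `T` is monotone. Put
`Φ y = Λ (‖xₙ - y‖²)` for a Banach limit `Λ`; uniform convexity of `E` makes `Φ` uniformly convex
on bounded sets. The upper bounds of the orbit in `P` are not known to exist, so minimize `Φ` on
the decreasing closed convex intervals `[xₘ, ∞)` instead: a minimizing sequence is Cauchy, and its
limit `c` is an upper bound minimizing `Φ` among all upper bounds, uniquely by uniform convexity.
By monotonicity `T c` is again an upper bound, and linearity and shift invariance of `Λ` turn the
α-nonexpansive inequality at the pairs `(xₙ, c)` into `Φ (T c) ≤ Φ c`. Hence `T c = c`.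
-/

open Filter Topology

open scoped BoundedContinuousFunction

noncomputable def cesaroMean (a : ℕ → ℝ) (n : ℕ) : ℝ :=
  (n : ℝ)⁻¹ * ∑ k ∈ Finset.range n, a k

lemma abs_cesaroMean_le {a : ℕ → ℝ} {C : ℝ} (h : ∀ n, |a n| ≤ C) (n : ℕ) :
    |cesaroMean a n| ≤ C := by
  rcases Nat.eq_zero_or_pos n with rfl | hn
  · simpa [cesaroMean] using (abs_nonneg _).trans (h 0)
  have hn' : (0 : ℝ) < n := Nat.cast_pos.2 hn
  rw [cesaroMean, abs_mul, abs_inv, Nat.abs_cast, inv_mul_le_iff₀ hn']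
  calc |∑ k ∈ Finset.range n, a k| ≤ ∑ k ∈ Finset.range n, |a k| := Finset.abs_sum_le_sum_abs _ _
    _ ≤ ∑ _k ∈ Finset.range n, C := Finset.sum_le_sum fun k _ => h k
    _ = n * C := by simp

lemma cesaroMean_add (a b : ℕ → ℝ) : cesaroMean (a + b) = cesaroMean a + cesaroMean b := by
  ext n; simp [cesaroMean, Finset.sum_add_distrib, mul_add]

lemma cesaroMean_smul (c : ℝ) (a : ℕ → ℝ) : cesaroMean (c • a) = c • cesaroMean a := by
  ext n; simp [cesaroMean, ← Finset.mul_sum, mul_left_comm]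

lemma cesaroMean_const (c : ℝ) {n : ℕ} (hn : n ≠ 0) : cesaroMean (fun _ => c) n = c := by
  simp [cesaroMean, hn]

lemma cesaroMean_shift_sub (a : ℕ → ℝ) (n : ℕ) :
    cesaroMean (fun k => a (k + 1)) n - cesaroMean a n = (n : ℝ)⁻¹ * (a n - a 0) := by
  simp only [cesaroMean, ← mul_sub, ← Finset.sum_sub_distrib, Finset.sum_range_sub]

lemma tendsto_cesaroMean_shift_sub (a : ℕ →ᵇ ℝ) :
    Tendsto (fun n => cesaroMean (fun k => a (k + 1)) n - cesaroMean a n) atTop (𝓝 0) := by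
  simp only [cesaroMean_shift_sub]
  refine tendsto_inv_atTop_nhds_zero_nat.zero_mul_isBoundedUnder_le
    (isBoundedUnder_of ⟨2 * ‖a‖, fun n => ?_⟩)
  calc ‖a n - a 0‖ ≤ ‖a n‖ + ‖a 0‖ := norm_sub_le _ _
    _ ≤ 2 * ‖a‖ := by linarith [a.norm_coe_le_norm n, a.norm_coe_le_norm 0]

lemma exists_tendsto_cesaroMean_hyperfilter (a : ℕ →ᵇ ℝ) :
    ∃ L, Tendsto (cesaroMean a) (hyperfilter ℕ) (𝓝 L) := by
  have hmem : ∀ n, cesaroMean a n ∈ Set.Icc (-‖a‖) ‖a‖ := fun n =>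
    abs_le.1 (abs_cesaroMean_le (fun k => a.norm_coe_le_norm k) n)
  obtain ⟨L, -, hL⟩ := isCompact_Icc.ultrafilter_le_nhds ((hyperfilter ℕ).map (cesaroMean a))
    (by rw [Ultrafilter.coe_map, le_principal_iff]; exact mem_map.2 (univ_mem' hmem))
  exact ⟨L, hL⟩

lemma tendsto_limUnder_cesaroMean (a : ℕ →ᵇ ℝ) :
    Tendsto (cesaroMean a) (hyperfilter ℕ)
      (𝓝 (limUnder (hyperfilter ℕ : Filter ℕ) (cesaroMean a))) :=
  tendsto_nhds_limUnder (exists_tendsto_cesaroMean_hyperfilter a)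

/-- A Banach limit: averaging first makes it shift invariant, and the limit along a free
ultrafilter makes it defined on all bounded sequences and linear. -/
noncomputable def banachLimit : (ℕ →ᵇ ℝ) →ₗ[ℝ] ℝ where
  toFun a := limUnder (hyperfilter ℕ : Filter ℕ) (cesaroMean a)
  map_add' a b := tendsto_nhds_unique (tendsto_limUnder_cesaroMean (a + b)) <| by
    rw [BoundedContinuousFunction.coe_add, cesaroMean_add]
    exact (tendsto_limUnder_cesaroMean a).add (tendsto_limUnder_cesaroMean b)
  map_smul' c a := tendsto_nhds_unique (tendsto_limUnder_cesaroMean (c • a)) <| by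
    change Tendsto (cesaroMean (c • ⇑a)) _ (𝓝 (c • _))
    rw [cesaroMean_smul]
    exact (tendsto_limUnder_cesaroMean a).const_smul c

lemma tendsto_cesaroMean_banachLimit (a : ℕ →ᵇ ℝ) :
    Tendsto (cesaroMean a) (hyperfilter ℕ) (𝓝 (banachLimit a)) :=
  tendsto_limUnder_cesaroMean a

lemma banachLimit_nonneg {a : ℕ →ᵇ ℝ} (ha : ∀ n, 0 ≤ a n) : 0 ≤ banachLimit a :=
  ge_of_tendsto' (tendsto_cesaroMean_banachLimit a) fun n =>
    mul_nonneg (by positivity) (Finset.sum_nonneg fun k _ => ha k)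

lemma banachLimit_mono {a b : ℕ →ᵇ ℝ} (h : ∀ n, a n ≤ b n) : banachLimit a ≤ banachLimit b := by
  have := banachLimit_nonneg (a := b - a) fun n => by simpa using h n
  rwa [map_sub, sub_nonneg] at this

lemma banachLimit_const (c : ℝ) : banachLimit (BoundedContinuousFunction.const ℕ c) = c := by
  refine tendsto_nhds_unique (tendsto_cesaroMean_banachLimit _) (tendsto_const_nhds.congr' ?_)
  filter_upwards [(eventually_cofinite_ne 0).filter_mono hyperfilter_le_cofinite] with n hn
  exact (cesaroMean_const c hn).symm

lemma banachLimit_shift {a b : ℕ →ᵇ ℝ} (h : ∀ n, b n = a (n + 1)) :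
    banachLimit b = banachLimit a := by
  have hb : ⇑b = fun n => a (n + 1) := funext h
  have hfree : (hyperfilter ℕ : Filter ℕ) ≤ atTop := Nat.cofinite_eq_atTop ▸ hyperfilter_le_cofinite
  have := ((tendsto_cesaroMean_banachLimit b).sub (tendsto_cesaroMean_banachLimit a))
  rw [hb] at this
  exact sub_eq_zero.1 (tendsto_nhds_unique this ((tendsto_cesaroMean_shift_sub a).mono_left hfree))

lemma abs_banachLimit_sub_le {a b : ℕ →ᵇ ℝ} {K : ℝ} (h : ∀ n, |a n - b n| ≤ K) :
    |banachLimit a - banachLimit b| ≤ K := by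
  have hlow := banachLimit_mono (a := .const ℕ (-K)) (b := a - b) fun n => (abs_le.1 (h n)).1
  have hup := banachLimit_mono (a := a - b) (b := .const ℕ K) fun n => (abs_le.1 (h n)).2
  rw [banachLimit_const, map_sub] at hlow hup
  exact abs_le.2 ⟨hlow, hup⟩

def UniformlyMidpointConvexOnBounded {E : Type*} [NormedAddCommGroup E] [NormedSpace ℝ E]
    (f : E → ℝ) : Prop :=
  ∀ R ε : ℝ, 0 < ε → ∃ δ > 0, ∀ y z : E, ‖y‖ ≤ R → ‖z‖ ≤ R → ε ≤ ‖y - z‖ →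
    f (midpoint ℝ y z) ≤ (f y + f z) / 2 - δ

section UniformConvexity

variable {E : Type*} [NormedAddCommGroup E] [NormedSpace ℝ E] [UniformConvexSpace E]

/-- Rescaling by `max ‖a‖ ‖b‖ ≥ ε / 2` brings `a, b` into the unit ball at distance `≥ ε / R`. -/
lemma exists_norm_midpoint_le_max_sub (R : ℝ) {ε : ℝ} (hε : 0 < ε) :
    ∃ δ > 0, ∀ a b : E, ‖a‖ ≤ R → ‖b‖ ≤ R → ε ≤ ‖a - b‖ →
      ‖midpoint ℝ a b‖ ≤ max ‖a‖ ‖b‖ - δ := by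
  rcases le_or_gt R 0 with hR | hR
  · refine ⟨1, one_pos, fun a b ha hb hab => absurd hab (not_le.2 ?_)⟩
    linarith [norm_sub_le a b]
  obtain ⟨δ₀, hδ₀, huc⟩ := exists_forall_closed_ball_dist_add_le_two_sub E (div_pos hε hR)
  refine ⟨ε * δ₀ / 4, by positivity, fun a b ha hb hab => ?_⟩
  set m := max ‖a‖ ‖b‖
  have hεm : ε ≤ 2 * m := by
    linarith [norm_sub_le a b, le_max_left ‖a‖ ‖b‖, le_max_right ‖a‖ ‖b‖]
  have hm : 0 < m := by linarith
  have hmR : m ≤ R := max_le ha hb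
  have hunit : ∀ v : E, ‖v‖ ≤ m → ‖m⁻¹ • v‖ ≤ 1 := fun v hv => by
    rw [norm_smul_of_nonneg (inv_nonneg.2 hm.le), inv_mul_le_iff₀ hm, mul_one]; exact hv
  have hdist : ε / R ≤ ‖m⁻¹ • a - m⁻¹ • b‖ := by
    rw [← smul_sub, norm_smul_of_nonneg (inv_nonneg.2 hm.le), le_inv_mul_iff₀ hm]
    calc m * (ε / R) ≤ R * (ε / R) := by gcongr
      _ = ε := by field_simp
      _ ≤ ‖a - b‖ := hab
  have hsum : ‖a + b‖ ≤ m * (2 - δ₀) := by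
    have := huc (hunit a (le_max_left _ _)) (hunit b (le_max_right _ _)) hdist
    rwa [← smul_add, norm_smul_of_nonneg (inv_nonneg.2 hm.le), inv_mul_le_iff₀ hm] at this
  rw [midpoint_eq_smul_add, invOf_eq_inv, norm_smul_of_nonneg (by norm_num)]
  nlinarith

/-- Either `s, t` are far apart, and the gap in `((s + t) / 2) ^ 2 ≤ (s ^ 2 + t ^ 2) / 2` helps,
or `t ≈ s`, and `u ≤ s - d` helps. -/
lemma sq_le_add_sq_div_two_sub {u s t d : ℝ} (hu : 0 ≤ u) (ht : 0 ≤ t) (hts : t ≤ s)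
    (hd : 0 < d) (hu₁ : u ≤ (s + t) / 2) (hu₂ : u ≤ s - d) :
    u ^ 2 ≤ (s ^ 2 + t ^ 2) / 2 - d ^ 2 / 16 := by
  rcases le_or_gt (d / 2) (s - t) with h | h
  · nlinarith
  · nlinarith

theorem uniformlyMidpointConvexOnBounded_sq_norm :
    UniformlyMidpointConvexOnBounded (fun a : E => ‖a‖ ^ 2) := by
  intro R ε hε
  obtain ⟨d, hd, hmid⟩ := exists_norm_midpoint_le_max_sub (E := E) R hε
  refine ⟨d ^ 2 / 16, by positivity, fun a b ha hb hab => ?_⟩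
  have hmid' := hmid a b ha hb hab
  have htri : ‖midpoint ℝ a b‖ ≤ (‖a‖ + ‖b‖) / 2 := by
    rw [midpoint_eq_smul_add, invOf_eq_inv, norm_smul_of_nonneg (by norm_num)]
    linarith [norm_add_le a b]
  beta_reduce
  rcases le_total ‖b‖ ‖a‖ with h | h
  · rw [max_eq_left h] at hmid'
    exact sq_le_add_sq_div_two_sub (norm_nonneg _) (norm_nonneg _) h hd htri hmid'
  · rw [max_eq_right h] at hmid'
    rw [add_comm ‖a‖] at htri
    rw [add_comm (‖a‖ ^ 2)]
    exact sq_le_add_sq_div_two_sub (norm_nonneg _) (norm_nonneg _) h hd htri hmid'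

end UniformConvexity

section Minimization

variable {E : Type*} [NormedAddCommGroup E] [NormedSpace ℝ E] {Φ : E → ℝ}

theorem eq_of_isMinOn_of_le (hΦ : UniformlyMidpointConvexOnBounded Φ) {S : Set E}
    (hS : Convex ℝ S) {c d : E} (hc : c ∈ S) (hd : d ∈ S)
    (hmin : IsMinOn Φ S c) (hdc : Φ d ≤ Φ c) : d = c := by
  by_contra hne
  obtain ⟨δ, hδ, h⟩ := hΦ (max ‖d‖ ‖c‖) ‖d - c‖ (norm_pos_iff.2 (sub_ne_zero.2 hne))
  have hlt := h d c (le_max_left _ _) (le_max_right _ _) le_rfl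
  have hge := isMinOn_iff.1 hmin _ (hS.midpoint_mem hd hc)
  linarith

/-- Two far-apart terms `y n`, `y N` would have a midpoint in `U N` with `Φ < r - δ / 2`. -/
theorem cauchySeq_of_uniformlyMidpointConvexOnBounded (hΦ : UniformlyMidpointConvexOnBounded Φ)
    {U : ℕ → Set E} (hU : Antitone U)
    (hconv : ∀ m, Convex ℝ (U m))
    {y : ℕ → E} (hyU : ∀ m, y m ∈ U m) {R : ℝ} (hyR : ∀ m, ‖y m‖ ≤ R) {r : ℝ}
    (hy : Tendsto (Φ ∘ y) atTop (𝓝 r))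
    (hlow : ∀ δ > 0, ∀ᶠ m in atTop, ∀ w ∈ U m, r - δ ≤ Φ w) :
    CauchySeq y := by
  refine Metric.cauchySeq_iff'.2 fun ε hε => ?_
  obtain ⟨δ, hδ, h⟩ := hΦ R ε hε
  obtain ⟨N₁, hN₁⟩ := eventually_atTop.1 (hlow (δ / 2) (half_pos hδ))
  obtain ⟨N₂, hN₂⟩ := eventually_atTop.1 (hy.eventually (gt_mem_nhds (lt_add_of_pos_right r
    (half_pos hδ))))
  refine ⟨max N₁ N₂, fun n hn => not_le.1 fun hfar => ?_⟩
  rw [dist_eq_norm] at hfar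
  have hmidN := hN₁ _ (le_max_left _ _) _ ((hconv _).midpoint_mem (hU hn (hyU n)) (hyU _))
  have hconvΦ := h (y n) (y _) (hyR n) (hyR _) hfar
  have hn₂ := hN₂ n ((le_max_right _ _).trans hn)
  have hN := hN₂ _ (le_max_right N₁ N₂)
  simp only [Function.comp_apply] at hn₂ hN
  linarith

/-- The infima `I m` of `Φ` on the decreasing sets `U m` increase to some `r`; near-minimizers
`y m ∈ U m` form a Cauchy sequence whose limit attains `r`, which bounds `Φ` below on `⋂ U m`. -/
theorem exists_isMinOn_iInter [CompleteSpace E] (hΦ : UniformlyMidpointConvexOnBounded Φ)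
    (hcont : Continuous Φ) (hbelow : BddBelow (Set.range Φ))
    (hcoer : ∀ C, Bornology.IsBounded {y | Φ y ≤ C})
    {U : ℕ → Set E} (hU : Antitone U) (hclosed : ∀ m, IsClosed (U m))
    (hconv : ∀ m, Convex ℝ (U m))
    (hbdd : ∃ C, ∀ m, ∃ y ∈ U m, Φ y ≤ C) :
    ∃ c ∈ ⋂ m, U m, IsMinOn Φ (⋂ m, U m) c := by
  obtain ⟨C, hC⟩ := hbdd
  set I : ℕ → ℝ := fun m => sInf (Φ '' U m)
  have hne : ∀ m, (Φ '' U m).Nonempty := fun m =>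
    let ⟨y, hy, _⟩ := hC m
    ⟨Φ y, y, hy, rfl⟩
  have hbddI : ∀ m, BddBelow (Φ '' U m) := fun m => hbelow.mono (Set.image_subset_range _ _)
  have hIle : ∀ m, ∀ w ∈ U m, I m ≤ Φ w := fun m w hw => csInf_le (hbddI m) ⟨w, hw, rfl⟩
  have hImono : Monotone I := fun m n h =>
    csInf_le_csInf (hbddI m) (hne n) (Set.image_mono (hU h))
  have hIC : BddAbove (Set.range I) := ⟨C, by
    rintro _ ⟨m, rfl⟩
    obtain ⟨y, hy, hyC⟩ := hC m
    exact (hIle m y hy).trans hyC⟩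
  set r := ⨆ m, I m
  have hI : Tendsto I atTop (𝓝 r) := tendsto_atTop_ciSup hImono hIC
  have hIr : ∀ m, I m ≤ r := le_ciSup hIC
  have hnear : ∀ m : ℕ, ∃ y ∈ U m, Φ y < I m + 1 / ((m : ℝ) + 1) := fun m =>
    let ⟨_, ⟨y, hy, hyt⟩, hlt⟩ :=
      exists_lt_of_csInf_lt (hne m) (lt_add_of_pos_right (I m) Nat.one_div_pos_of_nat)
    ⟨y, hy, hyt ▸ hlt⟩
  choose y hyU hyI using hnear
  have hy : Tendsto (Φ ∘ y) atTop (𝓝 r) :=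
    tendsto_of_tendsto_of_tendsto_of_le_of_le hI
      (by simpa using hI.add tendsto_one_div_add_atTop_nhds_zero_nat)
      (fun m => hIle m _ (hyU m)) (fun m => (hyI m).le)
  have hlow : ∀ δ > 0, ∀ᶠ m in atTop, ∀ w ∈ U m, r - δ ≤ Φ w := fun δ hδ =>
    (hI.eventually (lt_mem_nhds (sub_lt_self r hδ))).mono fun m hm w hw =>
      hm.le.trans (hIle m w hw)
  obtain ⟨R, hR⟩ := isBounded_iff_forall_norm_le.1 (hcoer (r + 1))
  have hyR : ∀ m, ‖y m‖ ≤ R := fun m => hR _ <| by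
    have : 1 / ((m : ℝ) + 1) ≤ 1 := Nat.one_div_le_one_div (Nat.zero_le m) |>.trans_eq (by simp)
    show Φ (y m) ≤ r + 1
    linarith [hyI m, hIr m]
  obtain ⟨c, hc⟩ := cauchySeq_tendsto_of_complete
    (cauchySeq_of_uniformlyMidpointConvexOnBounded hΦ hU hconv hyU hyR hy hlow)
  have hcU : c ∈ ⋂ m, U m := Set.mem_iInter.2 fun m =>
    (hclosed m).mem_of_tendsto hc ((eventually_ge_atTop m).mono fun k hk => hU hk (hyU k))
  refine ⟨c, hcU, isMinOn_iff.2 fun w hw => ?_⟩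
  rw [tendsto_nhds_unique ((hcont.tendsto c).comp hc) hy]
  exact ciSup_le fun m => hIle m w (Set.mem_iInter.1 hw m)

end Minimization

section AsymptoticSqDist

variable {E : Type*} [NormedAddCommGroup E] (x : ℕ →ᵇ E)

noncomputable def sqDistSeq (y : E) : ℕ →ᵇ ℝ :=
  (x - BoundedContinuousFunction.const ℕ y).normComp ^ 2

@[simp]
lemma sqDistSeq_apply (y : E) (n : ℕ) : sqDistSeq x y n = ‖x n - y‖ ^ 2 := rfl

/-- The Banach limit of `‖x n - y‖ ^ 2`, a linear substitute for `limsup ‖x n - y‖ ^ 2`. -/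
noncomputable def asymptoticSqDist (y : E) : ℝ :=
  banachLimit (sqDistSeq x y)

lemma asymptoticSqDist_nonneg (y : E) : 0 ≤ asymptoticSqDist x y :=
  banachLimit_nonneg fun n => by rw [sqDistSeq_apply]; positivity

lemma BoundedContinuousFunction.norm_apply_sub_le (n : ℕ) (y : E) : ‖x n - y‖ ≤ ‖x‖ + ‖y‖ :=
  (norm_sub_le _ _).trans (add_le_add_left (x.norm_coe_le_norm n) _)

lemma asymptoticSqDist_le (y : E) : asymptoticSqDist x y ≤ (‖x‖ + ‖y‖) ^ 2 := by
  rw [← banachLimit_const ((‖x‖ + ‖y‖) ^ 2)]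
  exact banachLimit_mono fun n => by
    simpa using pow_le_pow_left₀ (norm_nonneg _) (x.norm_apply_sub_le n y) 2

lemma sq_norm_div_two_sub_le_asymptoticSqDist (y : E) :
    ‖y‖ ^ 2 / 2 - ‖x‖ ^ 2 ≤ asymptoticSqDist x y := by
  rw [← banachLimit_const (‖y‖ ^ 2 / 2 - ‖x‖ ^ 2)]
  refine banachLimit_mono fun n => ?_
  have hy : ‖y‖ ≤ ‖x n - y‖ + ‖x‖ := by
    linarith [norm_sub_norm_le y (x n), norm_sub_rev (x n) y, x.norm_coe_le_norm n]
  simp only [BoundedContinuousFunction.const_apply, sqDistSeq_apply]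
  nlinarith [sq_nonneg (‖x n - y‖ - ‖x‖), mul_self_le_mul_self (norm_nonneg y) hy]

lemma isBounded_setOf_asymptoticSqDist_le (C : ℝ) :
    Bornology.IsBounded {y | asymptoticSqDist x y ≤ C} := by
  refine isBounded_iff_forall_norm_le.2 ⟨2 * (C + ‖x‖ ^ 2) + 1, fun y hy => ?_⟩
  nlinarith [sq_norm_div_two_sub_le_asymptoticSqDist x y, Set.mem_ofPred.1 hy]

lemma abs_asymptoticSqDist_sub_le (u v : E) :
    |asymptoticSqDist x u - asymptoticSqDist x v| ≤ (2 * ‖x‖ + ‖u‖ + ‖v‖) * ‖u - v‖ := by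
  refine abs_banachLimit_sub_le fun n => ?_
  have hdiff : |‖x n - u‖ - ‖x n - v‖| ≤ ‖u - v‖ := by
    simpa [norm_sub_rev v u] using abs_norm_sub_norm_le (x n - u) (x n - v)
  have hsum : |‖x n - u‖ + ‖x n - v‖| ≤ 2 * ‖x‖ + ‖u‖ + ‖v‖ := by
    rw [abs_of_nonneg (by positivity)]
    linarith [x.norm_apply_sub_le n u, x.norm_apply_sub_le n v]
  rw [sqDistSeq_apply, sqDistSeq_apply, sq_sub_sq, abs_mul]
  exact mul_le_mul hsum hdiff (abs_nonneg _) (by positivity)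

lemma continuous_asymptoticSqDist : Continuous (asymptoticSqDist x) := by
  refine continuous_iff_continuousAt.2 fun c => ?_
  have hbound : Tendsto (fun y => (2 * ‖x‖ + ‖y‖ + ‖c‖) * ‖y - c‖) (𝓝 c) (𝓝 0) := by
    have hcont : Continuous fun y => (2 * ‖x‖ + ‖y‖ + ‖c‖) * ‖y - c‖ := by fun_prop
    simpa using hcont.tendsto c
  exact tendsto_iff_norm_sub_tendsto_zero.2 <|
    squeeze_zero (fun _ => norm_nonneg _) (fun y => abs_asymptoticSqDist_sub_le x y c) hbound

theorem uniformlyMidpointConvexOnBounded_asymptoticSqDist [NormedSpace ℝ E]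
    [UniformConvexSpace E] :
    UniformlyMidpointConvexOnBounded (asymptoticSqDist x) := by
  intro R ε hε
  obtain ⟨δ, hδ, h⟩ := uniformlyMidpointConvexOnBounded_sq_norm (E := E) (‖x‖ + R) ε hε
  refine ⟨δ, hδ, fun y z hy hz hyz => ?_⟩
  have hpt : ∀ n, ‖x n - midpoint ℝ y z‖ ^ 2 ≤ (‖x n - y‖ ^ 2 + ‖x n - z‖ ^ 2) / 2 - δ := by
    intro n
    have hmid : x n - midpoint ℝ y z = midpoint ℝ (x n - y) (x n - z) := by
      simp only [midpoint_eq_smul_add, invOf_eq_inv]; module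
    rw [hmid]
    refine h _ _ ((x.norm_apply_sub_le n y).trans (by linarith))
      ((x.norm_apply_sub_le n z).trans (by linarith)) ?_
    rwa [sub_sub_sub_cancel_left, norm_sub_rev]
  have := banachLimit_mono (a := sqDistSeq x (midpoint ℝ y z))
    (b := (2⁻¹ : ℝ) • (sqDistSeq x y + sqDistSeq x z) - BoundedContinuousFunction.const ℕ δ)
    fun n => by simpa [div_eq_inv_mul, mul_add] using hpt n
  rw [map_sub, map_smul, map_add, banachLimit_const, smul_eq_mul] at this
  unfold asymptoticSqDist
  linarith

/-- Applying the shift-invariant `banachLimit` to the hypothesis gives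
`(1 - α) Φ y' ≤ (1 - α) Φ y`. -/
theorem asymptoticSqDist_le_of_forall_succ {α : ℝ} (hα : α < 1) {y y' : E}
    (h : ∀ n, ‖x (n + 1) - y'‖ ^ 2 ≤
      α * ‖x (n + 1) - y‖ ^ 2 + α * ‖x n - y'‖ ^ 2 + (1 - 2 * α) * ‖x n - y‖ ^ 2) :
    asymptoticSqDist x y' ≤ asymptoticSqDist x y := by
  let shift : C(ℕ, ℕ) := ⟨(· + 1), continuous_of_discreteTopology⟩
  have hshift : ∀ w, banachLimit ((sqDistSeq x w).compContinuous shift) = asymptoticSqDist x w :=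
    fun w => banachLimit_shift fun n => rfl
  have := banachLimit_mono (a := (sqDistSeq x y').compContinuous shift)
    (b := α • (sqDistSeq x y).compContinuous shift + α • sqDistSeq x y'
      + (1 - 2 * α) • sqDistSeq x y) fun n => by simpa [shift] using h n
  rw [map_add, map_add, map_smul, map_smul, map_smul, hshift, hshift, smul_eq_mul, smul_eq_mul,
    smul_eq_mul] at this
  unfold asymptoticSqDist at this ⊢
  nlinarith

end AsymptoticSqDist

section Cone

variable {E : Type*} [NormedAddCommGroup E] [NormedSpace ℝ E] {P : Set E}

lemma IsClosedConvexCone.zero_mem_s11 (hP : IsClosedConvexCone P) : (0 : E) ∈ P := by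
  obtain ⟨⟨w, hw⟩, -, -, -, hcomb⟩ := hP
  simpa using hcomb w hw w hw 0 0 le_rfl le_rfl

lemma IsClosedConvexCone.add_mem_s11 (hP : IsClosedConvexCone P) {u v : E} (hu : u ∈ P)
    (hv : v ∈ P) : u + v ∈ P := by
  simpa using hP.2.2.2.2 u hu v hv 1 1 zero_le_one zero_le_one

lemma IsClosedConvexCone.convex_s11 (hP : IsClosedConvexCone P) : Convex ℝ P :=
  fun u hu v hv a b ha hb _ => hP.2.2.2.2 u hu v hv a b ha hb

/-- The order interval `[a, ∞)` of `P`, for the order `x ≤ y ↔ y - x ∈ P`. -/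
def coneIci (P : Set E) (a : E) : Set E :=
  {y | y ∈ P ∧ y - a ∈ P}

lemma isClosed_coneIci (hP : IsClosedConvexCone P) (a : E) : IsClosed (coneIci P a) :=
  hP.2.1.inter (hP.2.1.preimage (continuous_id.sub continuous_const))

lemma convex_coneIci (hP : IsClosedConvexCone P) (a : E) : Convex ℝ (coneIci P a) := by
  have h : coneIci P a = P ∩ (fun y => y + -a) ⁻¹' P := by
    ext y; simp [coneIci, sub_eq_add_neg]
  exact h ▸ hP.convex_s11.inter (hP.convex_s11.translate_preimage_left (-a))

lemma mem_coneIci_self (hP : IsClosedConvexCone P) {a : E} (ha : a ∈ P) : a ∈ coneIci P a :=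
  ⟨ha, by simpa using hP.zero_mem_s11⟩

lemma coneIci_subset_coneIci (hP : IsClosedConvexCone P) {a b : E} (hab : b - a ∈ P) :
    coneIci P b ⊆ coneIci P a := fun y ⟨hy, hyb⟩ =>
  ⟨hy, by simpa using hP.add_mem_s11 hyb hab⟩

end Cone

section Orbit

variable {E : Type*} [NormedAddCommGroup E] [NormedSpace ℝ E] {P : Set E} {T : E → E}

lemma iterate_zero_mem (hP : IsClosedConvexCone P) (hTP : ∀ x ∈ P, T x ∈ P) (n : ℕ) :
    T^[n] 0 ∈ P := by
  induction n with
  | zero => exact hP.zero_mem_s11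
  | succ n ih => rw [Function.iterate_succ_apply']; exact hTP _ ih

lemma iterate_zero_sub_iterate_zero_mem (hP : IsClosedConvexCone P) (hTP : ∀ x ∈ P, T x ∈ P)
    (hmono : ∀ x ∈ P, ∀ y ∈ P, y - x ∈ P → T y - T x ∈ P) {m n : ℕ} (hmn : m ≤ n) :
    T^[n] 0 - T^[m] 0 ∈ P := by
  have hstep : ∀ k, T^[k + 1] 0 - T^[k] 0 ∈ P := by
    intro k
    induction k with
    | zero => simpa using hTP 0 hP.zero_mem_s11
    | succ k ih =>
      have h := hmono _ (iterate_zero_mem hP hTP k) _ (iterate_zero_mem hP hTP (k + 1)) ih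
      rwa [← Function.iterate_succ_apply' T (k + 1), ← Function.iterate_succ_apply' T k] at h
  induction n, hmn using Nat.le_induction with
  | base => simpa using hP.zero_mem_s11
  | succ n _ ih => simpa using hP.add_mem_s11 (hstep n) ih

lemma apply_mem_iInter_coneIci (hP : IsClosedConvexCone P) (hTP : ∀ x ∈ P, T x ∈ P)
    (hmono : ∀ x ∈ P, ∀ y ∈ P, y - x ∈ P → T y - T x ∈ P) {c : E}
    (hc : c ∈ ⋂ m : ℕ, coneIci P (T^[m] 0)) : T c ∈ ⋂ m : ℕ, coneIci P (T^[m] 0) := by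
  have hc' := Set.mem_iInter.1 hc
  have hTc : T c ∈ P := hTP c (hc' 0).1
  refine Set.mem_iInter.2 fun m => ⟨hTc, ?_⟩
  cases m with
  | zero => simpa using hTc
  | succ m =>
    rw [Function.iterate_succ_apply']
    exact hmono _ (iterate_zero_mem hP hTP m) c (hc' 0).1 (hc' m).2

/-- At a fixed point `z ≥ x` the α-nonexpansive inequality reads
`‖T x - z‖² ≤ α ‖T x - z‖² + (1 - α) ‖x - z‖²`. -/
lemma MonotoneAlphaNonexpansive.norm_apply_sub_le {K : Set E} {α : ℝ}
    (hT : MonotoneAlphaNonexpansive P K T α) (hα : α < 1) {x z : E} (hx : x ∈ K) (hz : z ∈ K)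
    (hxz : z - x ∈ P) (hTz : Function.IsFixedPt T z) : ‖T x - z‖ ≤ ‖x - z‖ := by
  have h := hT.2 x hx z hz hxz
  rw [hTz.eq, norm_sub_rev z x] at h
  have hsq : ‖T x - z‖ ^ 2 ≤ ‖x - z‖ ^ 2 := by nlinarith
  exact (pow_le_pow_iff_left₀ (norm_nonneg _) (norm_nonneg _) two_ne_zero).1 hsq

lemma norm_iterate_zero_le_of_isFixedPt (hP : IsClosedConvexCone P) (hTP : ∀ x ∈ P, T x ∈ P)
    {α : ℝ} (hT : MonotoneAlphaNonexpansive P P T α) (hα : α < 1) {z : E} (hz : z ∈ P)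
    (hTz : Function.IsFixedPt T z) (n : ℕ) : ‖T^[n] 0‖ ≤ 2 * ‖z‖ := by
  have key : ∀ n, z - T^[n] 0 ∈ P ∧ ‖T^[n] 0 - z‖ ≤ ‖z‖ := by
    intro n
    induction n with
    | zero => simpa using hz
    | succ n ih =>
      have hn := iterate_zero_mem hP hTP n
      rw [Function.iterate_succ_apply']
      exact ⟨by simpa [hTz.eq] using hT.1 _ hn z hz ih.1,
        (hT.norm_apply_sub_le hα hn hz ih.1 hTz).trans ih.2⟩
  linarith [norm_le_norm_sub_add (T^[n] 0) z, (key n).2]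

end Orbit

/-- Pazy-type characterization on a cone: a monotone α-nonexpansive self-map
of `P` has a fixed point iff the orbit of `0` is norm-bounded. -/
theorem pazy_fixed_point_iff_orbit_of_zero_bounded
    {E : Type*} [NormedAddCommGroup E] [NormedSpace ℝ E]
    [UniformConvexSpace E] [CompleteSpace E]
    (P : Set E) (hP : IsClosedConvexCone P)
    (T : E → E) (hTP : ∀ x ∈ P, T x ∈ P)
    (α : ℝ) (hα : α < 1)
    (hT : MonotoneAlphaNonexpansive P P T α) :
    (∃ z ∈ P, T z = z) ↔ (∃ M : ℝ, ∀ n : ℕ, ‖T^[n] (0 : E)‖ ≤ M) := by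
  refine ⟨fun ⟨z, hz, hTz⟩ => ⟨2 * ‖z‖, norm_iterate_zero_le_of_isFixedPt hP hTP hT hα hz hTz⟩,
    fun ⟨M, hM⟩ => ?_⟩
  let x : ℕ →ᵇ E := .ofNormedAddCommGroupDiscrete (fun n => T^[n] 0) M hM
  have hxP : ∀ n, x n ∈ P := iterate_zero_mem hP hTP
  have hbdd : ∀ m, ∃ y ∈ coneIci P (x m), asymptoticSqDist x y ≤ (2 * ‖x‖) ^ 2 := fun m =>
    ⟨x m, mem_coneIci_self hP (hxP m), (asymptoticSqDist_le x _).trans <| by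
      gcongr; linarith [x.norm_coe_le_norm m]⟩
  obtain ⟨c, hc, hmin⟩ := exists_isMinOn_iInter
    (uniformlyMidpointConvexOnBounded_asymptoticSqDist x) (continuous_asymptoticSqDist x)
    ⟨0, Set.forall_mem_range.2 (asymptoticSqDist_nonneg x)⟩
    (isBounded_setOf_asymptoticSqDist_le x)
    (fun _ _ hmn => coneIci_subset_coneIci hP (iterate_zero_sub_iterate_zero_mem hP hTP hT.1 hmn))
    (fun _ => isClosed_coneIci hP _) (fun _ => convex_coneIci hP _) ⟨_, hbdd⟩
  have hcP : c ∈ P := (Set.mem_iInter.1 hc 0).1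
  have hstep : asymptoticSqDist x (T c) ≤ asymptoticSqDist x c :=
    asymptoticSqDist_le_of_forall_succ x hα fun n => by
      have h := hT.2 (x n) (hxP n) c hcP (Set.mem_iInter.1 hc n).2
      rw [show x (n + 1) = T (x n) from Function.iterate_succ_apply' T n 0]
      rwa [norm_sub_rev (T c)] at h
  exact ⟨c, hcP, eq_of_isMinOn_of_le (uniformlyMidpointConvexOnBounded_asymptoticSqDist x)
    (convex_iInter fun _ => convex_coneIci hP _) hc (apply_mem_iInter_coneIci hP hTP hT.1 hc)
    hmin hstep⟩
end
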